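/- Invariance of the Bregman ball under SMD: let B = {w' : D_ψ(w, w') ≤ ε}, suppose D_{L_i}(w, w') ≥ 0 for all w' ∈ B and all i, L_i(w) = 0, L_i ≥ 0, and ψ - ηL_i is convex for all i. If w_0 ∈ B, then every SMD iterate w_k (defined by ∇ψ(w_k) = ∇ψ(w_{k-1}) - η∇L_{i_k}(w_{k-1})) remains in B. -/

import Mathlib

/-! Along a mirror step `∇ψ(b) = ∇ψ(a) - η ∇L(a)`, the gradient inequality for the convex function
`ψ - η L` between `a` and `b` gives the three-point inequality
`D_ψ(w, b) + η (L(b) + D_L(w, a)) ≤ D_ψ(w, a) + η L(w)`.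
When `L(w) = 0`, `L ≥ 0` and `D_L(w, a) ≥ 0`, the Bregman distance to `w` cannot increase, so the
ball `D_ψ(w, ·) ≤ ε` is invariant by induction on the iterates. -/

open scoped RealInnerProductSpace

theorem ConvexOn.hasFDerivAt_apply_sub_le {E : Type*} [NormedAddCommGroup E] [NormedSpace ℝ E]
    {f : E → ℝ} {f' : E →L[ℝ] ℝ} {x : E} (hf : ConvexOn ℝ Set.univ f) (hf' : HasFDerivAt f f' x)
    (y : E) : f' (y - x) ≤ f y - f x := by
  let c : ℝ →ᵃ[ℝ] E := AffineMap.lineMap x y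
  have hc : ∀ t, c t = x + t • (y - x) := fun t => by
    simp only [c, AffineMap.lineMap_apply, vsub_eq_sub, vadd_eq_add, add_comm]
  have hfc : ConvexOn ℝ Set.univ (f ∘ c) := by simpa using hf.comp_affineMap c
  have hline : HasDerivAt (fun t : ℝ => x + t • (y - x)) (y - x) 0 := by
    simpa using ((hasDerivAt_id (0 : ℝ)).smul_const (y - x)).const_add x
  have hderiv : HasDerivAt (f ∘ c) (f' (y - x)) 0 := by
    rw [show (c : ℝ → E) = fun t => x + t • (y - x) from funext hc]
    have hf'0 : HasFDerivAt f f' (x + (0 : ℝ) • (y - x)) := by simpa using hf'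
    exact hf'0.comp_hasDerivAt 0 hline
  simpa [slope_def_field, hc] using
    hfc.le_slope_of_hasDerivAt (Set.mem_univ 0) (Set.mem_univ 1) one_pos hderiv

section Bregman

variable {E : Type*} [NormedAddCommGroup E] [InnerProductSpace ℝ E] [CompleteSpace E]

noncomputable def bregmanDiv (F : E → ℝ) (x y : E) : ℝ :=
  F x - F y - ⟪gradient F y, x - y⟫

theorem bregmanDiv_mirrorStep_le {ψ L : E → ℝ} {η : ℝ} {a b : E} (w : E)
    (hψ : DifferentiableAt ℝ ψ a) (hL : DifferentiableAt ℝ L a)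
    (hconv : ConvexOn ℝ Set.univ (fun u => ψ u - η * L u))
    (hstep : gradient ψ b = gradient ψ a - η • gradient L a) :
    bregmanDiv ψ w b + η * (L b + bregmanDiv L w a) ≤ bregmanDiv ψ w a + η * L w := by
  have hgrad := hconv.hasFDerivAt_apply_sub_le (hψ.hasFDerivAt.sub (hL.hasFDerivAt.const_mul η)) b
  have hsplit (f : E →L[ℝ] ℝ) : f (w - b) = f (w - a) - f (b - a) := by
    rw [← map_sub, sub_sub_sub_cancel_right]
  simp only [sub_apply, smul_apply, smul_eq_mul] at hgrad
  simp only [bregmanDiv, hstep, inner_sub_left, real_inner_smul_left, inner_gradient_left, hsplit]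
  linarith

end Bregman

theorem smd_iterates_remain_in_ball_general
    (p n : ℕ) (ψ : EuclideanSpace ℝ (Fin p) → ℝ)
    (L : Fin n → EuclideanSpace ℝ (Fin p) → ℝ)
    (hψ : Differentiable ℝ ψ)
    (hL : ∀ i, Differentiable ℝ (L i))
    (hLnonneg : ∀ i u, 0 ≤ L i u)
    (w : EuclideanSpace ℝ (Fin p))
    (hw : ∀ i, L i w = 0)
    (ε η : ℝ) (hη : 0 < η)
    (hconv : ∀ i, ConvexOn ℝ Set.univ (fun u => ψ u - η * L i u))
    (B : Set (EuclideanSpace ℝ (Fin p)))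
    (hB : B = {w' | ψ w - ψ w' - ⟪gradient ψ w', w - w'⟫ ≤ ε})
    (hDL : ∀ i, ∀ w' ∈ B, 0 ≤ L i w - L i w' - ⟪gradient (L i) w', w - w'⟫)
    (idx : ℕ → Fin n)
    (iter : ℕ → EuclideanSpace ℝ (Fin p))
    (hupdate : ∀ k : ℕ, gradient ψ (iter (k + 1)) =
      gradient ψ (iter k) - η • gradient (L (idx k)) (iter k))
    (h0 : iter 0 ∈ B) :
    ∀ k : ℕ, iter k ∈ B := by
  subst hB
  intro k
  induction k with
  | zero => exact h0
  | succ k ih =>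
    have hstep := bregmanDiv_mirrorStep_le w (hψ _) (hL (idx k) _) (hconv (idx k)) (hupdate k)
    have hpos : 0 ≤ η * (L (idx k) (iter (k + 1)) + bregmanDiv (L (idx k)) w (iter k)) :=
      mul_nonneg hη.le (add_nonneg (hLnonneg _ _) (hDL _ _ ih))
    change bregmanDiv ψ w (iter (k + 1)) ≤ ε
    change bregmanDiv ψ w (iter k) ≤ ε at ih
    rw [hw, mul_zero, add_zero] at hstep
    linarith

theorem smd_iterates_remain_in_ball
    (p n : ℕ) (ψ : EuclideanSpace ℝ (Fin p) → ℝ)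
    (L : Fin n → EuclideanSpace ℝ (Fin p) → ℝ)
    (hψ : Differentiable ℝ ψ)
    (hψconv : StrictConvexOn ℝ Set.univ ψ)
    (hL : ∀ i, Differentiable ℝ (L i))
    (hLnonneg : ∀ i u, 0 ≤ L i u)
    (w : EuclideanSpace ℝ (Fin p))
    (hw : ∀ i, L i w = 0)
    (ε η : ℝ) (hε : 0 < ε) (hη : 0 < η)
    (hconv : ∀ i, ConvexOn ℝ Set.univ (fun u => ψ u - η * L i u))
    (B : Set (EuclideanSpace ℝ (Fin p)))
    (hB : B = {w' | ψ w - ψ w' - ⟪gradient ψ w', w - w'⟫ ≤ ε})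
    (hDL : ∀ i, ∀ w' ∈ B, 0 ≤ L i w - L i w' - ⟪gradient (L i) w', w - w'⟫)
    (idx : ℕ → Fin n)
    (iter : ℕ → EuclideanSpace ℝ (Fin p))
    (hupdate : ∀ k : ℕ, gradient ψ (iter (k + 1)) =
      gradient ψ (iter k) - η • gradient (L (idx k)) (iter k))
    (h0 : iter 0 ∈ B) :
    ∀ k : ℕ, iter k ∈ B :=
  smd_iterates_remain_in_ball_general p n ψ L hψ hL hLnonneg w hw ε η hη hconv B hB hDL idx iter
    hupdate h0
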